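/- arXiv:0910.1251 — 5 statements merged into one kernel-verified Lean document; each statement's English description precedes it below -/
import Mathlib

section
/- R* is the unique tensor with these properties: if T : V×V×V×V → ℝ is a multilinear map satisfying T(X,Y,Z,U) = −T(Y,X,Z,U), T(X,Y,Z,U) = −T(X,Y,U,Z), the first Bianchi identity T(X,Y,Z,U) + T(Y,Z,X,U) + T(Z,X,Y,U) = 0, the J-invariance T(X,Y,Z,U) = T(JX,JY,Z,U) for all X,Y,Z,U ∈ V, and T(X,JX,JX,X) = R(X,JX,JX,X) for all X ∈ V, then T = R*. -/
open RealInnerProductSpace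
open scoped BigOperators

noncomputable section

/-- A (curried) 4-linear form on `V`. -/
abbrev Tensor4 (V : Type*) [NormedAddCommGroup V] [InnerProductSpace ℝ V] :=
  V →ₗ[ℝ] V →ₗ[ℝ] V →ₗ[ℝ] V →ₗ[ℝ] ℝ

variable {V : Type*} [NormedAddCommGroup V] [InnerProductSpace ℝ V]

/-- `J` is an orthogonal complex structure: `J ∘ J = -id` and `g(JX, JY) = g(X, Y)`. -/
def OrthJ (J : V →ₗ[ℝ] V) : Prop :=
  (∀ X : V, J (J X) = -X) ∧ (∀ X Y : V, ⟪J X, J Y⟫ = ⟪X, Y⟫)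

/-- `R` is a curvature-like tensor. -/
def CurvatureLike (R : Tensor4 V) : Prop :=
  (∀ X Y Z U : V, R X Y Z U = - R Y X Z U) ∧
  (∀ X Y Z U : V, R X Y Z U = - R X Y U Z) ∧
  (∀ X Y Z U : V, R X Y Z U = R Z U X Y) ∧
  (∀ X Y Z U : V, R X Y Z U + R Y Z X U + R Z X Y U = 0)

/-- `R` is an RK-tensor: `R(X,Y,Z,U) = R(JX,JY,JZ,JU)`. -/
def IsRK (J : V →ₗ[ℝ] V) (R : Tensor4 V) : Prop :=
  ∀ X Y Z U : V, R X Y Z U = R (J X) (J Y) (J Z) (J U)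

/-- The tensor `R*` associated to `R` and `J`. -/
def Rstar (J : V →ₗ[ℝ] V) (R : Tensor4 V) (X Y Z U : V) : ℝ :=
  (3 / 16) * (R X Y Z U + R X Y (J Z) (J U) + R (J X) (J Y) Z U +
      R (J X) (J Y) (J Z) (J U)) +
  (1 / 16) * (R (J X) (J Z) Y U - R (J Y) (J Z) X U + R X Z (J Y) (J U) -
      R Y Z (J X) (J U) + R Y (J Z) (J X) U - R X (J Z) (J Y) U +
      R (J Y) Z X (J U) - R (J X) Z Y (J U))

variable {ι : Type*} [Fintype ι]

/-- The Ricci form `S(X,Y) = Σᵢ R(X,Eᵢ,Eᵢ,Y)`. -/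
def ric (b : OrthonormalBasis ι ℝ V) (R : Tensor4 V) (X Y : V) : ℝ :=
  ∑ i, R X (b i) (b i) Y

/-- `S'(X,Y) = Σᵢ R(X,Eᵢ,JEᵢ,JY)`. -/
def ric' (J : V →ₗ[ℝ] V) (b : OrthonormalBasis ι ℝ V) (R : Tensor4 V) (X Y : V) : ℝ :=
  ∑ i, R X (b i) (J (b i)) (J Y)

/-- `S*(X,Y) = Σᵢ R*(X,Eᵢ,Eᵢ,Y)`. -/
def ricStar (J : V →ₗ[ℝ] V) (b : OrthonormalBasis ι ℝ V) (R : Tensor4 V) (X Y : V) : ℝ :=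
  ∑ i, Rstar J R X (b i) (b i) Y

/-- The scalar curvature `τ = Σᵢ S(Eᵢ,Eᵢ)`. -/
def scal (b : OrthonormalBasis ι ℝ V) (R : Tensor4 V) : ℝ :=
  ∑ i, ric b R (b i) (b i)

/-- `τ' = Σᵢ S'(Eᵢ,Eᵢ)`. -/
def scal' (J : V →ₗ[ℝ] V) (b : OrthonormalBasis ι ℝ V) (R : Tensor4 V) : ℝ :=
  ∑ i, ric' J b R (b i) (b i)

/-- `τ* = Σᵢ S*(Eᵢ,Eᵢ)`. -/
def scalStar (J : V →ₗ[ℝ] V) (b : OrthonormalBasis ι ℝ V) (R : Tensor4 V) : ℝ :=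
  ∑ i, ricStar J b R (b i) (b i)

/-- The operator `φ` applied to a bilinear form `Q`. -/
def phi (Q : V → V → ℝ) (X Y Z U : V) : ℝ :=
  ⟪X, U⟫ * Q Y Z - ⟪X, Z⟫ * Q Y U + ⟪Y, Z⟫ * Q X U - ⟪Y, U⟫ * Q X Z

/-- The operator `ψ` applied to a bilinear form `Q`. -/
def psi (J : V →ₗ[ℝ] V) (Q : V → V → ℝ) (X Y Z U : V) : ℝ :=
  ⟪X, J U⟫ * Q Y (J Z) - ⟪X, J Z⟫ * Q Y (J U) - 2 * ⟪X, J Y⟫ * Q Z (J U) +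
  ⟪Y, J Z⟫ * Q X (J U) - ⟪Y, J U⟫ * Q X (J Z) - 2 * ⟪Z, J U⟫ * Q X (J Y)

/-- `π₁(X,Y,Z,U) = g(X,U)g(Y,Z) − g(X,Z)g(Y,U)`. -/
def pi1 (X Y Z U : V) : ℝ :=
  ⟪X, U⟫ * ⟪Y, Z⟫ - ⟪X, Z⟫ * ⟪Y, U⟫

/-- `π₂(X,Y,Z,U) = g(X,JU)g(Y,JZ) − g(X,JZ)g(Y,JU) − 2g(X,JY)g(Z,JU)`. -/
def pi2 (J : V →ₗ[ℝ] V) (X Y Z U : V) : ℝ :=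
  ⟪X, J U⟫ * ⟪Y, J Z⟫ - ⟪X, J Z⟫ * ⟪Y, J U⟫ - 2 * ⟪X, J Y⟫ * ⟪Z, J U⟫

/-- The generalized Bochner curvature tensor `B*`. -/
def Bstar (m : ℕ) (J : V →ₗ[ℝ] V) (b : OrthonormalBasis ι ℝ V) (R : Tensor4 V)
    (X Y Z U : V) : ℝ :=
  Rstar J R X Y Z U
    - (1 / (2 * ((m : ℝ) + 2))) *
        (phi (ricStar J b R) X Y Z U + psi J (ricStar J b R) X Y Z U)
    + (scalStar J b R / (4 * ((m : ℝ) + 1) * ((m : ℝ) + 2))) *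
        (pi1 X Y Z U + pi2 J X Y Z U)

/-- The Bochner curvature tensor `B` of an RK-tensor. -/
def Bochner (m : ℕ) (J : V →ₗ[ℝ] V) (b : OrthonormalBasis ι ℝ V) (R : Tensor4 V)
    (X Y Z U : V) : ℝ :=
  R X Y Z U
    - (1 / (8 * ((m : ℝ) + 2))) *
        (phi (fun x y => ric b R x y + 3 * ric' J b R x y) X Y Z U +
         psi J (fun x y => ric b R x y + 3 * ric' J b R x y) X Y Z U)
    - (1 / (8 * ((m : ℝ) - 2))) *
        (3 * phi (fun x y => ric b R x y - ric' J b R x y) X Y Z U -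
         psi J (fun x y => ric b R x y - ric' J b R x y) X Y Z U)
    + ((scal b R + 3 * scal' J b R) / (16 * ((m : ℝ) + 1) * ((m : ℝ) + 2))) *
        (pi1 X Y Z U + pi2 J X Y Z U)
    + ((scal b R - scal' J b R) / (16 * ((m : ℝ) - 1) * ((m : ℝ) - 2))) *
        (3 * pi1 X Y Z U - pi2 J X Y Z U)

/-!
Both `T` and `R*` are Kähler curvature tensors (algebraic curvature tensors invariant under
`J` in the first pair; for `R*` this is a direct check from the identities of `R`), and they
have the same holomorphic sectional curvature `X ↦ K(X, JX, JX, X)`, since `R*` does not change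
it. So it suffices that a Kähler curvature tensor `K` with vanishing holomorphic sectional
curvature vanishes. Polarizing `K(X, JX, JX, X) = 0` and using the Bianchi identity gives
`K(X, Y, Y, X) + 3 K(X, JY, JY, X) = 0`; replacing `Y` by `JY` gives
`3 K(X, Y, Y, X) + K(X, JY, JY, X) = 0`, so every sectional curvature vanishes, and an
algebraic curvature tensor with zero sectional curvature is zero.
-/

section Curvature

variable {E : Type*}

structure IsAlgCurvature (K : E → E → E → E → ℝ) : Prop where
  antisymm₁₂ : ∀ X Y Z U : E, K X Y Z U = -K Y X Z U
  antisymm₃₄ : ∀ X Y Z U : E, K X Y Z U = -K X Y U Z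
  bianchi : ∀ X Y Z U : E, K X Y Z U + K Y Z X U + K Z X Y U = 0

namespace IsAlgCurvature

variable {K K' : E → E → E → E → ℝ}

theorem pair_symm (hK : IsAlgCurvature K) (X Y Z U : E) : K X Y Z U = K Z U X Y := by
  have h1 := hK.antisymm₁₂
  have h2 := hK.antisymm₃₄
  have h3 := hK.bianchi
  linear_combination (1/2) * h1 Z Y U X - h1 Z U X Y + (1/2) * h2 U Z X Y - (1/2) * h2 Z X Y U
    - (1/2) * h2 Y Z X U - (1/2) * h3 Z Y U X + (1/2) * h3 Z X U Y - (1/2) * h2 X U Y Z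
    + (1/2) * h3 Z X Y U + (1/2) * h2 X Y U Z - (1/2) * h3 Y U X Z + (1/2) * h1 U X Y Z
    + (1/2) * h2 Y U X Z

theorem sub (hK : IsAlgCurvature K) (hK' : IsAlgCurvature K') :
    IsAlgCurvature fun X Y Z U => K X Y Z U - K' X Y Z U where
  antisymm₁₂ X Y Z U := by rw [hK.antisymm₁₂ X, hK'.antisymm₁₂ X]; ring
  antisymm₃₄ X Y Z U := by rw [hK.antisymm₃₄ X, hK'.antisymm₃₄ X]; ring
  bianchi X Y Z U := by linear_combination hK.bianchi X Y Z U - hK'.bianchi X Y Z U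

end IsAlgCurvature

variable [AddCommGroup E]

-- `R*` is defined pointwise, so the curvature theory below is stated for plain functions.
structure IsMultiadditive (K : E → E → E → E → ℝ) : Prop where
  add₁ : ∀ X X' Y Z U : E, K (X + X') Y Z U = K X Y Z U + K X' Y Z U
  add₂ : ∀ X Y Y' Z U : E, K X (Y + Y') Z U = K X Y Z U + K X Y' Z U
  add₃ : ∀ X Y Z Z' U : E, K X Y (Z + Z') U = K X Y Z U + K X Y Z' U
  add₄ : ∀ X Y Z U U' : E, K X Y Z (U + U') = K X Y Z U + K X Y Z U'

namespace IsMultiadditive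

variable {K K' : E → E → E → E → ℝ}

theorem sub (hK : IsMultiadditive K) (hK' : IsMultiadditive K') :
    IsMultiadditive fun X Y Z U => K X Y Z U - K' X Y Z U where
  add₁ X X' Y Z U := by rw [hK.add₁, hK'.add₁]; ring
  add₂ X Y Y' Z U := by rw [hK.add₂, hK'.add₂]; ring
  add₃ X Y Z Z' U := by rw [hK.add₃, hK'.add₃]; ring
  add₄ X Y Z U U' := by rw [hK.add₄, hK'.add₄]; ring

theorem neg₁ (hK : IsMultiadditive K) (X Y Z U : E) : K (-X) Y Z U = -K X Y Z U :=
  map_neg (AddMonoidHom.mk' (K · Y Z U) fun X X' => hK.add₁ X X' Y Z U) X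

theorem neg₂ (hK : IsMultiadditive K) (X Y Z U : E) : K X (-Y) Z U = -K X Y Z U :=
  map_neg (AddMonoidHom.mk' (K X · Z U) fun Y Y' => hK.add₂ X Y Y' Z U) Y

theorem neg₃ (hK : IsMultiadditive K) (X Y Z U : E) : K X Y (-Z) U = -K X Y Z U :=
  map_neg (AddMonoidHom.mk' (K X Y · U) fun Z Z' => hK.add₃ X Y Z Z' U) Z

theorem neg₄ (hK : IsMultiadditive K) (X Y Z U : E) : K X Y Z (-U) = -K X Y Z U :=
  map_neg (AddMonoidHom.mk' (K X Y Z) fun U U' => hK.add₄ X Y Z U U') U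

end IsMultiadditive

namespace IsAlgCurvature

variable {K : E → E → E → E → ℝ}

theorem eq_zero_of_sectional_eq_zero (hK : IsAlgCurvature K) (hadd : IsMultiadditive K)
    (hsec : ∀ X Y : E, K X Y Y X = 0) (X Y Z U : E) : K X Y Z U = 0 := by
  have h1 := hK.antisymm₁₂
  have h2 := hK.antisymm₃₄
  have h3 := hK.bianchi
  have hXYUX (X Y U : E) : K X Y U X = 0 := by
    have h := hsec X (Y + U)
    simp only [hadd.add₂, hadd.add₃, hsec, zero_add, add_zero] at h
    linear_combination (1/2) * h - (1/2) * hK.pair_symm X U Y X - (1/2) * h1 Y X X U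
      + (1/2) * h2 X Y X U
  have hswap₁₄ (X Y U Z : E) : K X Y U Z = -K Z Y U X := by
    have h := hXYUX (X + Z) Y U
    simp only [hadd.add₁, hadd.add₄, hXYUX, zero_add, add_zero] at h
    linear_combination h
  linear_combination (1/3) * h2 X Z Y U + (1/3) * h2 Z Y X U + (1/3) * h1 Y X Z U
    - (1/3) * h3 Y X Z U - (2/3) * hswap₁₄ X Y U Z - (1/3) * hswap₁₄ Y Z U X
    + (2/3) * h2 X Y Z U + (1/3) * h1 Z Y U X

end IsAlgCurvature

variable [Module ℝ E]

theorem isMultiadditive_of_linearMap (T : E →ₗ[ℝ] E →ₗ[ℝ] E →ₗ[ℝ] E →ₗ[ℝ] ℝ) :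
    IsMultiadditive fun X Y Z U => T X Y Z U where
  add₁ X X' Y Z U := by simp only [map_add, LinearMap.add_apply]
  add₂ X Y Y' Z U := by simp only [map_add, LinearMap.add_apply]
  add₃ X Y Z Z' U := by simp only [map_add, LinearMap.add_apply]
  add₄ X Y Z U U' := by simp only [map_add]

structure IsKahlerCurvature (J : E →ₗ[ℝ] E) (K : E → E → E → E → ℝ) : Prop
    extends IsAlgCurvature K where
  apply_J_J : ∀ X Y Z U : E, K (J X) (J Y) Z U = K X Y Z U

namespace IsKahlerCurvature

variable {J : E →ₗ[ℝ] E} {K K' : E → E → E → E → ℝ}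

theorem sub (hK : IsKahlerCurvature J K) (hK' : IsKahlerCurvature J K') :
    IsKahlerCurvature J fun X Y Z U => K X Y Z U - K' X Y Z U where
  toIsAlgCurvature := hK.toIsAlgCurvature.sub hK'.toIsAlgCurvature
  apply_J_J X Y Z U := by rw [hK.apply_J_J, hK'.apply_J_J]

theorem apply_J_J_right (hK : IsKahlerCurvature J K) (X Y Z U : E) :
    K X Y (J Z) (J U) = K X Y Z U := by
  rw [hK.pair_symm, hK.apply_J_J, hK.pair_symm]

theorem apply_J_left (hK : IsKahlerCurvature J K) (hJ : ∀ X : E, J (J X) = -X)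
    (hadd : IsMultiadditive K) (X Y Z U : E) : K (J X) Y Z U = -K X (J Y) Z U := by
  rw [← hK.apply_J_J X (J Y), hJ, hadd.neg₂, neg_neg]

theorem apply_J_right (hK : IsKahlerCurvature J K) (hJ : ∀ X : E, J (J X) = -X)
    (hadd : IsMultiadditive K) (X Y Z U : E) : K X Y (J Z) U = -K X Y Z (J U) := by
  rw [hK.pair_symm, hK.apply_J_left hJ hadd, hK.pair_symm]

theorem holSec_add_add_holSec_sub (hK : IsKahlerCurvature J K) (hJ : ∀ X : E, J (J X) = -X)
    (hadd : IsMultiadditive K) (X Y : E) :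
    K (X + Y) (J (X + Y)) (J (X + Y)) (X + Y) + K (X - Y) (J (X - Y)) (J (X - Y)) (X - Y) =
      2 * K X (J X) (J X) X + 2 * K Y (J Y) (J Y) Y + 4 * K X (J X) (J Y) Y
        + 8 * K X (J Y) (J Y) X := by
  have h1 := hK.antisymm₁₂
  have h2 := hK.antisymm₃₄
  simp only [sub_eq_add_neg, map_add, map_neg, hadd.add₁, hadd.add₂, hadd.add₃, hadd.add₄,
    hadd.neg₁, hadd.neg₂, hadd.neg₃, hadd.neg₄]
  linear_combination -2 * h2 X (J X) Y (J Y) + 2 * h2 X (J Y) Y (J X) + 2 * h1 (J X) X Y (J Y)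
    + 2 * h2 Y (J X) Y (J X) - 2 * hK.pair_symm (J X) X Y (J Y)
    + 4 * hK.apply_J_left hJ hadd Y X (J Y) X - 4 * h1 (J Y) X (J Y) X
    - 2 * hK.apply_J_right hJ hadd X (J Y) Y X - 2 * hK.apply_J_right hJ hadd Y (J X) Y X

theorem bianchi_J (hK : IsKahlerCurvature J K) (hJ : ∀ X : E, J (J X) = -X)
    (hadd : IsMultiadditive K) (X Y : E) :
    K X (J X) (J Y) Y = K X Y Y X + K X (J Y) (J Y) X := by
  linear_combination hK.antisymm₃₄ (J X) Y (J Y) X - hK.bianchi (J Y) (J X) X Y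
    - hK.pair_symm X Y (J Y) (J X) + hK.antisymm₁₂ (J X) X (J Y) Y
    - hK.pair_symm (J X) Y X (J Y) - hK.apply_J_left hJ hadd X Y (J Y) X
    + hK.apply_J_J_right X Y Y X

theorem eq_zero_of_holSec_eq_zero (hK : IsKahlerCurvature J K) (hJ : ∀ X : E, J (J X) = -X)
    (hadd : IsMultiadditive K) (hQ : ∀ X : E, K X (J X) (J X) X = 0) (X Y Z U : E) :
    K X Y Z U = 0 := by
  have hsec_J (X Y : E) : K X Y Y X + 3 * K X (J Y) (J Y) X = 0 := by
    have h := hK.holSec_add_add_holSec_sub hJ hadd X Y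
    rw [hQ, hQ, hQ, hQ, hK.bianchi_J hJ hadd] at h
    linarith
  refine hK.eq_zero_of_sectional_eq_zero hadd (fun X Y => ?_) X Y Z U
  have h := hsec_J X (J Y)
  rw [hJ, hadd.neg₂, hadd.neg₃, neg_neg] at h
  linarith [hsec_J X Y]

theorem eq_of_holSec_eq (hK : IsKahlerCurvature J K) (hK' : IsKahlerCurvature J K')
    (hJ : ∀ X : E, J (J X) = -X) (hadd : IsMultiadditive K) (hadd' : IsMultiadditive K')
    (hQ : ∀ X : E, K X (J X) (J X) X = K' X (J X) (J X) X) (X Y Z U : E) :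
    K X Y Z U = K' X Y Z U :=
  sub_eq_zero.mp <| (hK.sub hK').eq_zero_of_holSec_eq_zero hJ (hadd.sub hadd')
    (fun X => sub_eq_zero.mpr (hQ X)) X Y Z U

end IsKahlerCurvature

end Curvature

section Rstar

theorem isMultiadditive_Rstar (J : V →ₗ[ℝ] V) (R : Tensor4 V) :
    IsMultiadditive (Rstar J R) where
  add₁ X X' Y Z U := by simp only [Rstar, map_add, LinearMap.add_apply]; ring
  add₂ X Y Y' Z U := by simp only [Rstar, map_add, LinearMap.add_apply]; ring
  add₃ X Y Z Z' U := by simp only [Rstar, map_add, LinearMap.add_apply]; ring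
  add₄ X Y Z U U' := by simp only [Rstar, map_add]; ring

variable {J : V →ₗ[ℝ] V} {R : Tensor4 V}

theorem Rstar_antisymm₁₂ (hR : CurvatureLike R) (X Y Z U : V) :
    Rstar J R X Y Z U = -Rstar J R Y X Z U := by
  obtain ⟨h1, -, -, -⟩ := hR
  simp only [Rstar]
  linear_combination (3/16) * (h1 X Y Z U + h1 X Y (J Z) (J U) + h1 (J X) (J Y) Z U
    + h1 (J X) (J Y) (J Z) (J U))

theorem Rstar_antisymm₃₄ (hR : CurvatureLike R) (X Y Z U : V) :
    Rstar J R X Y Z U = -Rstar J R X Y U Z := by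
  obtain ⟨-, h2, hp, -⟩ := hR
  simp only [Rstar]
  linear_combination (3/16) * (h2 X Y Z U + h2 X Y (J U) (J Z) + h2 (J X) (J Y) Z U
      + h2 (J X) (J Y) (J U) (J Z))
    + (1/16) * (hp (J Y) U X (J Z) + hp X U (J Y) (J Z) + hp Y (J U) (J X) Z
      + hp X Z (J Y) (J U) + hp Y (J Z) (J X) U + hp (J X) (J Z) Y U - hp X (J U) (J Y) Z
      - hp Y Z (J X) (J U))

theorem Rstar_bianchi (hR : CurvatureLike R) (X Y Z U : V) :
    Rstar J R X Y Z U + Rstar J R Y Z X U + Rstar J R Z X Y U = 0 := by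
  obtain ⟨h1, -, -, h3⟩ := hR
  simp only [Rstar]
  linear_combination (3/16) * (h3 Z X Y U + h3 (J Z) (J X) (J Y) (J U))
    + (1/16) * (h3 Z (J X) Y (J U) - h3 (J Z) (J Y) X U - h3 (J X) (J Z) Y U
      - h3 (J X) Z (J Y) U - h3 X Z (J Y) (J U) + h3 Y (J Z) X (J U))
    + (1/8) * (h1 (J Z) (J X) Y U + h1 (J Y) (J Z) X U + h1 X Z (J Y) (J U)
      + h1 (J Y) (J X) Z U)
    + (1/16) * (h1 Z (J Y) X (J U) + h1 X Y (J Z) (J U) + h1 (J Y) X (J Z) U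
      + h1 Z (J X) (J Y) U - h1 (J Z) Y X (J U) + h1 Z Y (J X) (J U) - h1 (J X) Z Y (J U)
      + h1 (J Z) Y (J X) U)

theorem Rstar_apply_J_J (hJ : ∀ X : V, J (J X) = -X) (X Y Z U : V) :
    Rstar J R (J X) (J Y) Z U = Rstar J R X Y Z U := by
  have hR := isMultiadditive_of_linearMap R
  simp only [Rstar, hJ, hR.neg₁, hR.neg₂, hR.neg₃]
  ring

theorem isKahlerCurvature_Rstar (hJ : ∀ X : V, J (J X) = -X) (hR : CurvatureLike R) :
    IsKahlerCurvature J (Rstar J R) :=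
  ⟨⟨Rstar_antisymm₁₂ hR, Rstar_antisymm₃₄ hR, Rstar_bianchi hR⟩, Rstar_apply_J_J hJ⟩

theorem Rstar_holSec (hJ : ∀ X : V, J (J X) = -X) (hR : CurvatureLike R) (X : V) :
    Rstar J R X (J X) (J X) X = R X (J X) (J X) X := by
  obtain ⟨h1, h2, hp, -⟩ := hR
  have hRadd := isMultiadditive_of_linearMap R
  simp only [Rstar, hJ, hRadd.neg₁, hRadd.neg₂, hRadd.neg₃]
  linear_combination -(1/16) * (h1 X X X X + h1 (J X) (J X) (J X) (J X))
    - (3/16) * hp X (J X) (J X) X - (5/16) * (h2 X (J X) (J X) X + h1 (J X) X (J X) X)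

end Rstar

theorem Rstar_unique_general {V : Type*} [NormedAddCommGroup V] [InnerProductSpace ℝ V]
    (J : V →ₗ[ℝ] V) (hJ : OrthJ J) (R : Tensor4 V) (hR : CurvatureLike R)
    (T : Tensor4 V)
    (hT1 : ∀ X Y Z U : V, T X Y Z U = - T Y X Z U)
    (hT2 : ∀ X Y Z U : V, T X Y Z U = - T X Y U Z)
    (hT3 : ∀ X Y Z U : V, T X Y Z U + T Y Z X U + T Z X Y U = 0)
    (hT4 : ∀ X Y Z U : V, T X Y Z U = T (J X) (J Y) Z U)
    (hT5 : ∀ X : V, T X (J X) (J X) X = R X (J X) (J X) X) :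
    ∀ X Y Z U : V, T X Y Z U = Rstar J R X Y Z U := by
  have hT : IsKahlerCurvature J fun X Y Z U => T X Y Z U :=
    ⟨⟨hT1, hT2, hT3⟩, fun X Y Z U => (hT4 X Y Z U).symm⟩
  exact hT.eq_of_holSec_eq (isKahlerCurvature_Rstar hJ.1 hR) hJ.1 (isMultiadditive_of_linearMap T)
    (isMultiadditive_Rstar J R) fun X => (hT5 X).trans (Rstar_holSec hJ.1 hR X).symm

/-- `R*` is the unique tensor with the listed properties. -/
theorem Rstar_unique {V : Type*} [NormedAddCommGroup V] [InnerProductSpace ℝ V]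
    [FiniteDimensional ℝ V] {m : ℕ} (hm : 1 ≤ m) (hdim : Module.finrank ℝ V = 2 * m)
    (J : V →ₗ[ℝ] V) (hJ : OrthJ J) (R : Tensor4 V) (hR : CurvatureLike R)
    (T : Tensor4 V)
    (hT1 : ∀ X Y Z U : V, T X Y Z U = - T Y X Z U)
    (hT2 : ∀ X Y Z U : V, T X Y Z U = - T X Y U Z)
    (hT3 : ∀ X Y Z U : V, T X Y Z U + T Y Z X U + T Z X Y U = 0)
    (hT4 : ∀ X Y Z U : V, T X Y Z U = T (J X) (J Y) Z U)
    (hT5 : ∀ X : V, T X (J X) (J X) X = R X (J X) (J X) X) :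
    ∀ X Y Z U : V, T X Y Z U = Rstar J R X Y Z U :=
  Rstar_unique_general J hJ R hR T hT1 hT2 hT3 hT4 hT5
end
end

section
/- If R is an RK-tensor, then 4S*(X,Y) = S(X,Y) + 3S'(X,Y) for all X,Y ∈ V. -/
open RealInnerProductSpace
open scoped BigOperators

noncomputable section

variable {V : Type*} [NormedAddCommGroup V] [InnerProductSpace ℝ V]

variable {ι : Type*} [Fintype ι]

/-
For an RK-tensor, Bianchi and `J`-invariance collapse `8 R*(X,e,e,Y)` to
`3R(X,e,e,Y) + 5R(X,e,Je,JY) − R(X,Je,e,JY) − R(X,Je,Je,Y)`. Tracing over an orthonormal basis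
`{Eᵢ}` and comparing with the traces over the orthonormal basis `{JEᵢ}` turns the last two sums
into `−S'` and `S`, so that `8S* = 2S + 6S'`.
-/

theorem OrthonormalBasis.sum_bilin_self_eq {ι' : Type*} [Fintype ι']
    (B : V →ₗ[ℝ] V →ₗ[ℝ] ℝ) (b : OrthonormalBasis ι ℝ V) (b' : OrthonormalBasis ι' ℝ V) :
    ∑ i, B (b i) (b i) = ∑ j, B (b' j) (b' j) :=
  calc ∑ i, B (b i) (b i)
      = ∑ i, B (b i) (∑ j, ⟪b' j, b i⟫ • b' j) := by simp only [b'.sum_repr']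
    _ = ∑ j, B (∑ i, ⟪b i, b' j⟫ • b i) (b' j) := by
        simp only [map_sum, map_smul, LinearMap.sum_apply, LinearMap.smul_apply, smul_eq_mul,
          real_inner_comm]
        exact Finset.sum_comm
    _ = ∑ j, B (b' j) (b' j) := by simp only [b.sum_repr']

def OrthJ.toLinearIsometryEquiv {J : V →ₗ[ℝ] V} (hJ : OrthJ J) : V ≃ₗᵢ[ℝ] V :=
  LinearEquiv.isometryOfInner
    (LinearEquiv.ofLinearMap (f := J) (g := -J) (by ext x; simp [hJ.1 x])
      (by ext x; simp [hJ.1 x]))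
    hJ.2

@[simp]
theorem OrthJ.toLinearIsometryEquiv_apply {J : V →ₗ[ℝ] V} (hJ : OrthJ J) (x : V) :
    hJ.toLinearIsometryEquiv x = J x :=
  rfl

theorem sum_apply_J_J_eq_ric {J : V →ₗ[ℝ] V} (hJ : OrthJ J)
    (b : OrthonormalBasis ι ℝ V) (R : Tensor4 V) (X Y : V) :
    ∑ i, R X (J (b i)) (J (b i)) Y = ric b R X Y :=
  (b.map hJ.toLinearIsometryEquiv).sum_bilin_self_eq ((R X).compr₂ (LinearMap.applyₗ Y)) b

theorem sum_apply_J_self_eq_neg_ric' {J : V →ₗ[ℝ] V} (hJ : OrthJ J)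
    (b : OrthonormalBasis ι ℝ V) (R : Tensor4 V) (X Y : V) :
    ∑ i, R X (J (b i)) (b i) (J Y) = -ric' J b R X Y := by
  have h := (b.map hJ.toLinearIsometryEquiv).sum_bilin_self_eq
    (((R X).compr₂ (LinearMap.applyₗ (J Y))).compl₂ J) b
  simp only [OrthonormalBasis.map_apply, OrthJ.toLinearIsometryEquiv_apply,
    LinearMap.compl₂_apply, LinearMap.compr₂_apply, LinearMap.applyₗ_apply_apply, hJ.1, map_neg,
    Finset.sum_neg_distrib] at h
  rw [ric', ← h, neg_neg]

theorem eight_mul_Rstar_self {J : V →ₗ[ℝ] V} (hJ : ∀ X, J (J X) = -X) {R : Tensor4 V}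
    (hR : CurvatureLike R) (hRK : IsRK J R) (X Y e : V) :
    8 * Rstar J R X e e Y =
      3 * R X e e Y + 5 * R X e (J e) (J Y) - R X (J e) e (J Y) - R X (J e) (J e) Y := by
  obtain ⟨hswap, -, -, hbianchi⟩ := hR
  -- `map_neg R` fails: instance search does not find `Neg` on the codomain of `R`.
  have hneg : ∀ a b c d, R (-a) b c d = -R a b c d := fun a b c d => by
    rw [← neg_one_smul ℝ a, map_smul]
    simp
  have h1 := hRK X e (J e) (J Y)
  have h2 := hRK X e e Y
  have h3 := hswap (J e) (J e) X Y
  have h4 := hswap e e (J X) (J Y)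
  have h5 := hbianchi e (J e) (J X) Y
  have h6 := hswap (J e) (J X) e Y
  have h7 := hRK (J X) e (J e) Y
  have h8 := hRK (J e) e X (J Y)
  have h9 := hRK (J X) e e (J Y)
  simp only [hJ, hneg, map_neg, LinearMap.neg_apply, neg_neg] at h1 h2 h3 h4 h5 h6 h7 h8 h9
  simp only [Rstar]
  linarith

theorem four_ricStar_of_RK_general {V : Type*} [NormedAddCommGroup V] [InnerProductSpace ℝ V]
    {m : ℕ} (J : V →ₗ[ℝ] V) (hJ : OrthJ J) (R : Tensor4 V) (hR : CurvatureLike R)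
    (hRK : IsRK J R) (b : OrthonormalBasis (Fin (2 * m)) ℝ V) :
    ∀ X Y : V, 4 * ricStar J b R X Y = ric b R X Y + 3 * ric' J b R X Y := by
  intro X Y
  have h_eight : 8 * ricStar J b R X Y = 3 * ric b R X Y + 5 * ric' J b R X Y
      - ∑ i, R X (J (b i)) (b i) (J Y) - ∑ i, R X (J (b i)) (J (b i)) Y := by
    simp only [ricStar, ric, ric', Finset.mul_sum, eight_mul_Rstar_self hJ.1 hR hRK,
      Finset.sum_sub_distrib, Finset.sum_add_distrib]
  rw [sum_apply_J_self_eq_neg_ric' hJ, sum_apply_J_J_eq_ric hJ] at h_eight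
  linarith

/-- for an RK-tensor, `4S* = S + 3S'`. -/
theorem four_ricStar_of_RK {V : Type*} [NormedAddCommGroup V] [InnerProductSpace ℝ V]
    [FiniteDimensional ℝ V] {m : ℕ} (hm : 1 ≤ m) (hdim : Module.finrank ℝ V = 2 * m)
    (J : V →ₗ[ℝ] V) (hJ : OrthJ J) (R : Tensor4 V) (hR : CurvatureLike R)
    (hRK : IsRK J R) (b : OrthonormalBasis (Fin (2 * m)) ℝ V) :
    ∀ X Y : V, 4 * ricStar J b R X Y = ric b R X Y + 3 * ric' J b R X Y :=
  four_ricStar_of_RK_general J hJ R hR hRK b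
end
end

section
/- Suppose R is of product type with respect to the orthogonal J-invariant decomposition V = V₁ ⊕ V₂, and that the generalized Bochner curvature tensor of R vanishes, B* = 0. Then there exists a constant c ∈ ℝ such that S*(X,Y) = c·g(X,Y) for all X,Y ∈ V₁. -/
open RealInnerProductSpace
open scoped BigOperators

noncomputable section

variable {V : Type*} [NormedAddCommGroup V] [InnerProductSpace ℝ V]

variable {ι : Type*} [Fintype ι]

/-- `R` is of product type with respect to the decomposition `V = V₁ ⊕ V₂`. -/
def ProductType2 {V : Type*} [NormedAddCommGroup V] [InnerProductSpace ℝ V]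
    (V₁ V₂ : Submodule ℝ V) (R : Tensor4 V) : Prop :=
  ∀ X Y Z U : V, (X ∈ V₁ ∨ X ∈ V₂) → (Y ∈ V₁ ∨ Y ∈ V₂) →
    (Z ∈ V₁ ∨ Z ∈ V₂) → (U ∈ V₁ ∨ U ∈ V₂) →
    (X ∈ V₁ ∨ Y ∈ V₁ ∨ Z ∈ V₁ ∨ U ∈ V₁) → (X ∈ V₂ ∨ Y ∈ V₂ ∨ Z ∈ V₂ ∨ U ∈ V₂) →
    R X Y Z U = 0

/- Take a unit vector `Z ∈ V₂`. For `X, Y ∈ V₁` product type kills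
`R*(X,Z,Z,Y)`, and `B*(X,Z,Z,Y) = 0` reduces to
`S*(X,Y) + g(X,Y) S*(Z,Z) + g(X,JY) S*(Z,JZ) = τ*/(2(m+1)) · g(X,Y)`.
The term with `g(X,JY)` is skew in `(X,Y)` while the others are symmetric, so averaging with the
same identity for `(Y,X)` gives `S*(X,Y) = (τ*/(2(m+1)) - S*(Z,Z)) g(X,Y)`. -/

namespace OrthJ

variable {J : V →ₗ[ℝ] V}

lemma inner_map_right (hJ : OrthJ J) (x y : V) : ⟪x, J y⟫ = -⟪J x, y⟫ := by
  calc ⟪x, J y⟫ = ⟪J x, J (J y)⟫ := (hJ.2 x (J y)).symm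
    _ = -⟪J x, y⟫ := by rw [hJ.1 y, inner_neg_right]

lemma inner_map_self (hJ : OrthJ J) (x : V) : ⟪x, J x⟫ = 0 := by
  linarith [hJ.inner_map_right x x, real_inner_comm (J x) x]

end OrthJ

namespace CurvatureLike

variable {R : Tensor4 V}

lemma rstar_symm (hR : CurvatureLike R) (J : V →ₗ[ℝ] V) (x e y : V) :
    Rstar J R x e e y = Rstar J R y e e x := by
  obtain ⟨hskew₁, hskew₂, hpair, -⟩ := hR
  have hdiag : ∀ a c d : V, R a a c d = 0 := fun a c d => by linarith [hskew₁ a a c d]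
  have hrev : ∀ a b c d : V, R a b c d = R d c b a := fun a b c d => by
    rw [hpair, hskew₁ c d, hskew₂ d c]; ring
  have hswap : ∀ a b c d : V, R a b c d = R b a d c := fun a b c d => by
    rw [hskew₁, hskew₂ b a]; ring
  simp only [Rstar]
  linarith [hrev x e e y, hrev x e (J e) (J y), hrev (J x) (J e) e y,
    hrev (J x) (J e) (J e) (J y), hrev x (J e) (J e) y, hrev (J x) e e (J y),
    hswap (J e) e x (J y), hswap (J e) e y (J x),
    hdiag (J e) x y, hdiag (J e) y x, hdiag e (J x) (J y), hdiag e (J y) (J x)]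

lemma ricStar_symm (hR : CurvatureLike R) (J : V →ₗ[ℝ] V) (b : OrthonormalBasis ι ℝ V)
    (x y : V) : ricStar J b R x y = ricStar J b R y x :=
  Finset.sum_congr rfl fun i _ => hR.rstar_symm J x (b i) y

end CurvatureLike

lemma ProductType2.rstar_eq_zero {V₁ V₂ : Submodule ℝ V} {R : Tensor4 V}
    (hprod : ProductType2 V₁ V₂ R) {J : V →ₗ[ℝ] V}
    (hJ1 : ∀ x ∈ V₁, J x ∈ V₁) (hJ2 : ∀ x ∈ V₂, J x ∈ V₂)
    {x y z : V} (hx : x ∈ V₁) (hy : y ∈ V₁) (hz : z ∈ V₂) :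
    Rstar J R x z z y = 0 := by
  have h1221 : ∀ {a b c d : V}, a ∈ V₁ → b ∈ V₂ → c ∈ V₂ → d ∈ V₁ → R a b c d = 0 :=
    fun ha hb hc hd => hprod _ _ _ _ (.inl ha) (.inr hb) (.inr hc) (.inl hd)
      (.inl ha) (.inr (.inl hb))
  have h2211 : ∀ {a b c d : V}, a ∈ V₂ → b ∈ V₂ → c ∈ V₁ → d ∈ V₁ → R a b c d = 0 :=
    fun ha hb hc hd => hprod _ _ _ _ (.inr ha) (.inr hb) (.inl hc) (.inl hd)
      (.inr (.inr (.inl hc))) (.inl ha)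
  have hJx := hJ1 x hx
  have hJy := hJ1 y hy
  have hJz := hJ2 z hz
  simp only [Rstar]
  rw [h1221 hx hz hz hy, h1221 hx hz hJz hJy, h1221 hJx hJz hz hy, h1221 hJx hJz hJz hJy,
    h2211 hJz hJz hx hy, h2211 hz hz hJx hJy, h2211 hz hJz hJx hy, h1221 hx hJz hJz hy,
    h2211 hJz hz hx hJy, h1221 hJx hz hz hJy]
  ring

section UnitNormal

variable {J : V →ₗ[ℝ] V} {R : Tensor4 V} {X Y Z : V}

lemma bstar_apply_of_orthogonal (m : ℕ) (hJ : OrthJ J) (b : OrthonormalBasis ι ℝ V)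
    (hZ : ⟪Z, Z⟫ = 1) (hXZ : ⟪X, Z⟫ = 0) (hYZ : ⟪Y, Z⟫ = 0)
    (hXJZ : ⟪X, J Z⟫ = 0) (hYJZ : ⟪Y, J Z⟫ = 0) :
    Bstar m J b R X Z Z Y = Rstar J R X Z Z Y
      - (1 / (2 * ((m : ℝ) + 2))) * (ricStar J b R X Y + ⟪X, Y⟫ * ricStar J b R Z Z
          + ⟪X, J Y⟫ * ricStar J b R Z (J Z))
      + (scalStar J b R / (4 * ((m : ℝ) + 1) * ((m : ℝ) + 2))) * ⟪X, Y⟫ := by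
  have hZY : ⟪Z, Y⟫ = 0 := by rw [real_inner_comm, hYZ]
  have hZJY : ⟪Z, J Y⟫ = 0 := by rw [hJ.inner_map_right, real_inner_comm, hYJZ, neg_zero]
  simp only [Bstar, phi, psi, pi1, pi2, hZ, hXZ, hZY, hXJZ, hZJY, hJ.inner_map_self]
  ring

lemma ricStar_eq_of_bstar_eq_zero (m : ℕ) (hJ : OrthJ J) (hR : CurvatureLike R)
    (b : OrthonormalBasis ι ℝ V) (hXY : Bstar m J b R X Z Z Y = 0)
    (hYX : Bstar m J b R Y Z Z X = 0) (hZ : ⟪Z, Z⟫ = 1) (hXZ : ⟪X, Z⟫ = 0) (hYZ : ⟪Y, Z⟫ = 0)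
    (hXJZ : ⟪X, J Z⟫ = 0) (hYJZ : ⟪Y, J Z⟫ = 0) (hRZ : Rstar J R X Z Z Y = 0) :
    ricStar J b R X Y =
      (scalStar J b R / (2 * ((m : ℝ) + 1)) - ricStar J b R Z Z) * ⟪X, Y⟫ := by
  rw [bstar_apply_of_orthogonal m hJ b hZ hXZ hYZ hXJZ hYJZ, hRZ] at hXY
  have hJYX : ⟪Y, J X⟫ = -⟪X, J Y⟫ := by rw [hJ.inner_map_right, real_inner_comm]
  rw [bstar_apply_of_orthogonal m hJ b hZ hYZ hXZ hYJZ hXJZ, hR.rstar_symm, hRZ,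
    hR.ricStar_symm J b Y X, real_inner_comm X Y, hJYX] at hYX
  have hm₁ : (m : ℝ) + 1 ≠ 0 := by positivity
  have hm₂ : (m : ℝ) + 2 ≠ 0 := by positivity
  field_simp at hXY hYX ⊢
  linear_combination -(hXY + hYX) / 4

end UnitNormal

theorem ricStar_proportional_on_factor_general {V : Type*} [NormedAddCommGroup V]
    [InnerProductSpace ℝ V] {m k : ℕ}
    (J : V →ₗ[ℝ] V) (hJ : OrthJ J) (R : Tensor4 V) (hR : CurvatureLike R)
    (b : OrthonormalBasis (Fin (2 * m)) ℝ V)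
    (V₁ V₂ : Submodule ℝ V)
    (horth : ∀ x ∈ V₁, ∀ y ∈ V₂, ⟪x, y⟫ = (0 : ℝ))
    (hJ1 : ∀ x ∈ V₁, J x ∈ V₁) (hJ2 : ∀ x ∈ V₂, J x ∈ V₂)
    (hk2 : k < m)
    (hd2 : Module.finrank ℝ V₂ = 2 * (m - k))
    (hprod : ProductType2 V₁ V₂ R)
    (hB : ∀ X Y Z U : V, Bstar m J b R X Y Z U = 0) :
    ∃ c : ℝ, ∀ X ∈ V₁, ∀ Y ∈ V₁, ricStar J b R X Y = c * ⟪X, Y⟫ := by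
  have : Nontrivial V₂ := Module.nontrivial_of_finrank_pos (R := ℝ) (by omega)
  obtain ⟨⟨Z, hZ₂⟩, hZnorm⟩ := exists_norm_eq V₂ zero_le_one
  have hZ : ⟪Z, Z⟫ = 1 := by
    rw [real_inner_self_eq_norm_sq, show ‖Z‖ = 1 from hZnorm, one_pow]
  refine ⟨scalStar J b R / (2 * ((m : ℝ) + 1)) - ricStar J b R Z Z, fun X hX Y hY => ?_⟩
  exact ricStar_eq_of_bstar_eq_zero m hJ hR b (hB ..) (hB ..) hZ (horth X hX Z hZ₂) (horth Y hY Z hZ₂)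
    (horth X hX _ (hJ2 Z hZ₂)) (horth Y hY _ (hJ2 Z hZ₂))
    (hprod.rstar_eq_zero hJ1 hJ2 hX hY hZ₂)

/-- if `R` is of product type and `B* = 0`, then `S* = c·g` on `V₁`. -/
theorem ricStar_proportional_on_factor {V : Type*} [NormedAddCommGroup V]
    [InnerProductSpace ℝ V] [FiniteDimensional ℝ V] {m k : ℕ}
    (hm : 1 ≤ m) (hdim : Module.finrank ℝ V = 2 * m)
    (J : V →ₗ[ℝ] V) (hJ : OrthJ J) (R : Tensor4 V) (hR : CurvatureLike R)
    (b : OrthonormalBasis (Fin (2 * m)) ℝ V)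
    (V₁ V₂ : Submodule ℝ V)
    (horth : ∀ x ∈ V₁, ∀ y ∈ V₂, ⟪x, y⟫ = (0 : ℝ))
    (hsup : V₁ ⊔ V₂ = ⊤)
    (hJ1 : ∀ x ∈ V₁, J x ∈ V₁) (hJ2 : ∀ x ∈ V₂, J x ∈ V₂)
    (hk1 : 1 ≤ k) (hk2 : k < m)
    (hd1 : Module.finrank ℝ V₁ = 2 * k) (hd2 : Module.finrank ℝ V₂ = 2 * (m - k))
    (hprod : ProductType2 V₁ V₂ R)
    (hB : ∀ X Y Z U : V, Bstar m J b R X Y Z U = 0) :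
    ∃ c : ℝ, ∀ X ∈ V₁, ∀ Y ∈ V₁, ricStar J b R X Y = c * ⟪X, Y⟫ :=
  ricStar_proportional_on_factor_general J hJ R hR b V₁ V₂ horth hJ1 hJ2 hk2 hd2 hprod hB
end
end

section
/- (Corollary 2.2, pointwise form.) Suppose V = V₁ ⊕ V₂ ⊕ V₃ is an orthogonal direct sum of three nonzero J-invariant subspaces and R is of product type with respect to this decomposition (i.e., R(X,Y,Z,U) = 0 whenever each of the four arguments lies in V₁ ∪ V₂ ∪ V₃ and not all four arguments lie in the same V_j). Then the generalized Bochner curvature tensor of R vanishes, B* = 0, if and only if R(X,JX,JX,X) = 0 for all X ∈ V (i.e., the holomorphic sectional curvature is identically zero). -/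
open RealInnerProductSpace
open scoped BigOperators

noncomputable section

variable {V : Type*} [NormedAddCommGroup V] [InnerProductSpace ℝ V]

variable {ι : Type*} [Fintype ι]

/-! `R*` is a curvature-like tensor of Kähler type (`R*(JX,JY,Z,U) = R*(X,Y,Z,U)`) with the same
holomorphic sectional curvature as `R`, and it is again of product type. A Kähler-type
curvature tensor is determined by its holomorphic sectional curvature, so
`R(X,JX,JX,X) ≡ 0` forces `R* = 0`, hence `S* = 0`, `τ* = 0` and `B* = 0`.

Conversely, let `B* = 0`. For `p, q` in different factors, `B*(p,q,q,p) = 0` reads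
`2(m+1)(|p|² S*(q,q) + |q|² S*(p,p)) = τ* |p|² |q|²`. The three such relations among `p` and
nonzero vectors of the other two factors yield `4(m+1) S*(p,p) = τ* |p|²` on every factor; since `S*` vanishes across factors, `4(m+1) S* = τ* g`. Tracing gives
`(2m + 4) τ* = 0`, so `S* = 0`, `B* = R*`, and `R*(X,JX,JX,X) = R(X,JX,JX,X)`. -/

-- `map_neg` does not fire in the first slot: instance search fails on
-- `Neg (V →ₗ[ℝ] V →ₗ[ℝ] V →ₗ[ℝ] ℝ)`.
lemma Tensor4.map_neg_left (T : Tensor4 V) (X Y Z U : V) : T (-X) Y Z U = -T X Y Z U := by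
  simp only [← neg_one_smul ℝ X, map_smul, LinearMap.smul_apply, smul_eq_mul, neg_one_mul]

def rstarTensor (J : V →ₗ[ℝ] V) (R : Tensor4 V) : Tensor4 V := by
  refine LinearMap.mk₂ ℝ (fun X Y => LinearMap.mk₂ ℝ (fun Z U => Rstar J R X Y Z U) ?_ ?_ ?_ ?_)
    ?_ ?_ ?_ ?_ <;> intros <;> try ext
  all_goals
    simp only [Rstar, LinearMap.mk₂_apply, map_add, map_smul, LinearMap.add_apply,
      LinearMap.smul_apply, smul_eq_mul]
    ring

lemma rstarTensor_apply (J : V →ₗ[ℝ] V) (R : Tensor4 V) (X Y Z U : V) :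
    rstarTensor J R X Y Z U = Rstar J R X Y Z U :=
  rfl

lemma ricStar_eq_ric (J : V →ₗ[ℝ] V) (b : OrthonormalBasis ι ℝ V) (R : Tensor4 V) :
    ricStar J b R = ric b (rstarTensor J R) :=
  rfl

lemma scalStar_eq_scal (J : V →ₗ[ℝ] V) (b : OrthonormalBasis ι ℝ V) (R : Tensor4 V) :
    scalStar J b R = scal b (rstarTensor J R) :=
  rfl

section Rstar

variable {J : V →ₗ[ℝ] V} {R : Tensor4 V}

lemma CurvatureLike.rstarTensor (hR : CurvatureLike R) : CurvatureLike (rstarTensor J R) := by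
  obtain ⟨h₁, h₂, h₃, h₄⟩ := hR
  refine ⟨fun X Y Z U => ?_, fun X Y Z U => ?_, fun X Y Z U => ?_, fun X Y Z U => ?_⟩ <;>
    simp only [rstarTensor_apply, Rstar]
  · linarith [h₁ X Y Z U, h₁ X Y (J Z) (J U), h₁ (J X) (J Y) Z U, h₁ (J X) (J Y) (J Z) (J U)]
  · linarith [h₂ X Y Z U, h₂ X Y (J Z) (J U), h₂ X (J Y) Z (J U),
      h₄ X (J Y) Z (J U), h₂ X (J Y) (J Z) U, h₄ X (J Y) (J Z) U,
      h₂ (J X) Y Z (J U), h₄ (J X) Y Z (J U), h₂ (J X) Y (J Z) U,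
      h₄ (J X) Y (J Z) U, h₂ (J X) (J Y) Z U, h₂ (J X) (J Y) (J Z) (J U),
      h₄ X (J Y) U (J Z), h₄ X (J Y) (J U) Z, h₄ (J X) Y U (J Z),
      h₄ (J X) Y (J U) Z, h₁ X Z (J Y) (J U), h₃ X Z (J Y) (J U),
      h₁ X (J Z) (J Y) U, h₃ X (J Z) (J Y) U, h₁ (J X) Z Y (J U),
      h₃ (J X) Z Y (J U), h₁ (J X) (J Z) Y U, h₃ (J X) (J Z) Y U,
      h₁ X U (J Y) (J Z), h₁ X (J U) (J Y) Z, h₁ (J X) U Y (J Z),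
      h₁ (J X) (J U) Y Z]
  · linarith [h₃ X Y Z U, h₃ X Y (J Z) (J U), h₃ X (J Y) Z (J U),
      h₄ X (J Y) Z (J U), h₃ X (J Y) (J Z) U, h₄ X (J Y) (J Z) U,
      h₃ (J X) Y Z (J U), h₄ (J X) Y Z (J U), h₃ (J X) Y (J Z) U,
      h₄ (J X) Y (J Z) U, h₃ (J X) (J Y) Z U, h₃ (J X) (J Y) (J Z) (J U),
      h₁ X Z (J Y) (J U), h₂ X Z (J Y) (J U), h₁ X (J Z) (J Y) U,
      h₂ X (J Z) (J Y) U, h₁ (J X) Z Y (J U), h₂ (J X) Z Y (J U),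
      h₁ (J X) (J Z) Y U, h₂ (J X) (J Z) Y U, h₁ X Z (J U) (J Y),
      h₄ X Z (J U) (J Y), h₁ X (J Z) U (J Y), h₄ X (J Z) U (J Y),
      h₁ (J X) Z (J U) Y, h₄ (J X) Z (J U) Y, h₁ (J X) (J Z) U Y,
      h₄ (J X) (J Z) U Y]
  · linarith [h₄ X Y Z U, h₁ X Y (J Z) (J U), h₁ X (J Y) Z (J U),
      h₄ X (J Y) Z (J U), h₁ X (J Y) (J Z) U, h₄ X (J Y) (J Z) U,
      h₁ (J X) Y Z (J U), h₄ (J X) Y Z (J U), h₁ (J X) Y (J Z) U,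
      h₄ (J X) Y (J Z) U, h₁ (J X) (J Y) Z U, h₄ (J X) (J Y) (J Z) (J U),
      h₁ X Z (J Y) (J U), h₁ X (J Z) Y (J U), h₄ X (J Z) Y (J U),
      h₁ X (J Z) (J Y) U, h₄ X (J Z) (J Y) U, h₁ (J X) Z Y (J U),
      h₄ (J X) Z Y (J U), h₁ (J X) Z (J Y) U, h₄ (J X) Z (J Y) U,
      h₁ (J X) (J Z) Y U]

lemma rstarTensor_apply_J_J (hJ : ∀ X, J (J X) = -X) (X Y Z U : V) :
    rstarTensor J R (J X) (J Y) Z U = rstarTensor J R X Y Z U := by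
  simp only [rstarTensor_apply, Rstar, hJ, map_neg, LinearMap.neg_apply, Tensor4.map_neg_left]
  ring

lemma Rstar_apply_self_J_J_self (hJ : ∀ X, J (J X) = -X) (hR : CurvatureLike R) (X : V) :
    Rstar J R X (J X) (J X) X = R X (J X) (J X) X := by
  obtain ⟨h₁, h₂, -, -⟩ := hR
  simp only [Rstar, hJ, map_neg, LinearMap.neg_apply, Tensor4.map_neg_left]
  linarith [h₁ X X X X, h₁ (J X) (J X) (J X) (J X), h₁ (J X) X (J X) X, h₁ (J X) X X (J X),
    h₂ X (J X) X (J X)]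

end Rstar

namespace Tensor4

variable {J : V →ₗ[ℝ] V} {T : Tensor4 V}

lemma apply_J_left (hJ : ∀ X, J (J X) = -X)
    (hTJ : ∀ X Y Z U, T (J X) (J Y) Z U = T X Y Z U) (X Y Z U : V) :
    T (J X) Y Z U = -T X (J Y) Z U := by
  rw [← hTJ X (J Y), hJ]
  simp

lemma apply_J_comm (hJ : ∀ X, J (J X) = -X) (hT : CurvatureLike T)
    (hTJ : ∀ X Y Z U, T (J X) (J Y) Z U = T X Y Z U) (X Y Z U : V) :
    T X (J Y) Z U = T Y (J X) Z U := by
  rw [hT.1 Y, apply_J_left hJ hTJ, neg_neg]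

lemma apply_J_J_right (hT : CurvatureLike T)
    (hTJ : ∀ X Y Z U, T (J X) (J Y) Z U = T X Y Z U) (X Y Z U : V) :
    T X Y (J Z) (J U) = T X Y Z U := by
  rw [hT.2.2.1, hTJ, ← hT.2.2.1]

lemma apply_J_right (hJ : ∀ X, J (J X) = -X) (hT : CurvatureLike T)
    (hTJ : ∀ X Y Z U, T (J X) (J Y) Z U = T X Y Z U) (X Y Z U : V) :
    T X Y (J Z) U = -T X Y Z (J U) := by
  rw [← apply_J_J_right hT hTJ X Y Z (J U), hJ]
  simp

lemma apply_self_J_J_eq_zero (hJ : ∀ X, J (J X) = -X) (hT : CurvatureLike T)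
    (hTJ : ∀ X Y Z U, T (J X) (J Y) Z U = T X Y Z U)
    (hH : ∀ X, T X (J X) (J X) X = 0) (X Y : V) :
    T X (J X) (J X) Y = 0 := by
  -- `4 T(X,JX,JX,Y)` is the `s³t`-coefficient of the quartic `T(Z,JZ,JZ,Z)`, `Z = sX + tY`,
  -- which vanishes identically; its values at `(s,t) = (1,1), (1,2), (2,1)` isolate it.
  have h₁₁ := hH (X + Y)
  have h₁₂ := hH (X + (Y + Y))
  have h₂₁ := hH (X + X + Y)
  simp only [map_add, LinearMap.add_apply] at h₁₁ h₁₂ h₂₁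
  have e₁ : T Y (J X) (J X) X = T X (J X) (J X) Y := by
    rw [hT.2.2.1, hT.1, hT.2.1, neg_neg]
  have e₂ : T X (J Y) (J X) X = T X (J X) (J X) Y := by
    rw [apply_J_comm hJ hT hTJ, e₁]
  have e₃ : T X (J X) (J Y) X = T X (J X) (J X) Y := by
    rw [apply_J_right hJ hT hTJ, hT.2.1, neg_neg]
  linarith [hH X, hH Y]

lemma apply_J_J_polarized_eq_zero (hJ : ∀ X, J (J X) = -X) (hT : CurvatureLike T)
    (hTJ : ∀ X Y Z U, T (J X) (J Y) Z U = T X Y Z U)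
    (hH : ∀ X, T X (J X) (J X) X = 0) (a b c d : V) :
    T a (J b) (J c) d + T a (J c) (J b) d + T b (J c) (J a) d = 0 := by
  have h := apply_self_J_J_eq_zero hJ hT hTJ hH
  have habc := h (a + b + c) d
  simp only [map_add, LinearMap.add_apply, h] at habc
  have hab := h (a + b) d
  have hac := h (a + c) d
  have hbc := h (b + c) d
  simp only [map_add, LinearMap.add_apply, h] at hab hac hbc
  linarith [apply_J_comm hJ hT hTJ a b (J c) d, apply_J_comm hJ hT hTJ a c (J b) d,
    apply_J_comm hJ hT hTJ b c (J a) d]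

theorem eq_zero_of_holomorphic_eq_zero (hJ : ∀ X, J (J X) = -X) (hT : CurvatureLike T)
    (hTJ : ∀ X Y Z U, T (J X) (J Y) Z U = T X Y Z U)
    (hH : ∀ X, T X (J X) (J X) X = 0) (X Y Z U : V) :
    T X Y Z U = 0 := by
  -- With `K(a,b,c) = T(a,Jb,Jc,d)`, symmetric in its first two arguments, `h₁` reads
  -- `K(a,b,c) + K(a,c,b) + K(b,c,a) = 0`, and `h₂` combined with the Bianchi identities
  -- `hbca`, `habc` reads `3 K(a,c,b) = K(a,b,c) + K(b,c,a)`.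
  have hK : ∀ a b c d, T a (J c) (J b) d = 0 := by
    intro a b c d
    have h₁ := apply_J_J_polarized_eq_zero hJ hT hTJ hH a b c d
    have h₂ := apply_J_J_polarized_eq_zero hJ hT hTJ hH b (J c) (J a) d
    simp only [hJ, map_neg, LinearMap.neg_apply, neg_neg] at h₂
    have hbca := hT.2.2.2 a (J b) (J c) d
    have habc := hT.2.2.2 c (J a) (J b) d
    rw [hTJ, hT.1 (J c)] at hbca
    rw [hTJ, hT.1 (J b), apply_J_comm hJ hT hTJ c b, apply_J_comm hJ hT hTJ c a] at habc
    linarith [hT.1 b a c d, apply_J_left hJ hTJ c a (J b) d, apply_J_comm hJ hT hTJ c a (J b) d]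
  simpa [hJ] using hK X (J Z) (J Y) U

end Tensor4

section Ricci

variable {T : Tensor4 V}

lemma ric_add_left (b : OrthonormalBasis ι ℝ V) (X X' Y : V) :
    ric b T (X + X') Y = ric b T X Y + ric b T X' Y := by
  simp only [ric, map_add, LinearMap.add_apply, Finset.sum_add_distrib]

lemma ric_add_right (b : OrthonormalBasis ι ℝ V) (X Y Y' : V) :
    ric b T X (Y + Y') = ric b T X Y + ric b T X Y' := by
  simp only [ric, map_add, Finset.sum_add_distrib]

lemma ric_comm (hT : CurvatureLike T) (b : OrthonormalBasis ι ℝ V) (X Y : V) :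
    ric b T X Y = ric b T Y X := by
  refine Finset.sum_congr rfl fun i _ => ?_
  rw [hT.2.2.1, hT.1, hT.2.1, neg_neg]

lemma mul_scal_eq_of_mul_ric_eq (b : OrthonormalBasis ι ℝ V) {c s : ℝ}
    (h : ∀ X Y, c * ric b T X Y = s * ⟪X, Y⟫) :
    c * scal b T = s * Fintype.card ι := by
  simp only [scal, Finset.mul_sum, h, real_inner_self_eq_norm_sq, b.orthonormal.1, one_pow,
    mul_one, Finset.sum_const, Finset.card_univ, nsmul_eq_mul, mul_comm]

end Ricci

lemma eq_zero_of_forall_mem_of_iSup_eq_top {κ S M N : Type*} [Semiring S] [AddCommMonoid M]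
    [Module S M] [AddCommGroup N] {W : κ → Submodule S M} (hsup : ⨆ i, W i = ⊤) {B : M → M → N}
    (hadd_left : ∀ x x' y, B (x + x') y = B x y + B x' y)
    (hadd_right : ∀ x y y', B x (y + y') = B x y + B x y')
    (h : ∀ i j, ∀ x ∈ W i, ∀ y ∈ W j, B x y = 0) (x y : M) :
    B x y = 0 := by
  have hmem : ∀ z : M, z ∈ ⨆ i, W i := fun z => hsup ▸ Submodule.mem_top
  refine Submodule.iSup_induction W (motive := fun x => ∀ y, B x y = 0) (hmem x)
    (fun i x hx y => ?_) (fun y => by simpa using hadd_left 0 0 y)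
    (fun x x' hx hx' y => by rw [hadd_left, hx, hx', add_zero]) y
  exact Submodule.iSup_induction W (motive := fun y => B x y = 0) (hmem y)
    (fun j y hy => h i j x hx y hy) (by simpa using hadd_right x 0 0)
    (fun y y' hy hy' => by rw [hadd_right, hy, hy', add_zero])

section ProductType

variable {κ : Type*} {W : κ → Submodule ℝ V}

def IsProductType (W : κ → Submodule ℝ V) (T : Tensor4 V) : Prop :=
  ∀ X Y Z U : V, (∃ i, X ∈ W i) → (∃ i, Y ∈ W i) → (∃ i, Z ∈ W i) →
    (∃ i, U ∈ W i) → (¬ ∃ j, X ∈ W j ∧ Y ∈ W j ∧ Z ∈ W j ∧ U ∈ W j) → T X Y Z U = 0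

lemma IsProductType.rstarTensor {J : V →ₗ[ℝ] V} {R : Tensor4 V} (hJ : ∀ X, J (J X) = -X)
    (hJW : ∀ j, ∀ x ∈ W j, J x ∈ W j) (hR : IsProductType W R) :
    IsProductType W (rstarTensor J R) := by
  have hmem : ∀ j x, J x ∈ W j ↔ x ∈ W j := fun j x =>
    ⟨fun h => by simpa [hJ] using neg_mem (hJW j _ h), hJW j x⟩
  intro X Y Z U hX hY hZ hU hmix
  simp only [rstarTensor_apply, Rstar]
  rw [hR, hR, hR, hR, hR, hR, hR, hR, hR, hR, hR, hR]
  · ring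
  all_goals try simp only [hmem]
  all_goals first
    | assumption
    | exact fun ⟨j, hj⟩ => hmix ⟨j, by tauto⟩

structure IsOrthogonalDecomposition (W : κ → Submodule ℝ V) : Prop where
  orthogonal : ∀ i j, i ≠ j → ∀ x ∈ W i, ∀ y ∈ W j, ⟪x, y⟫ = (0 : ℝ)
  iSup_eq_top : ⨆ i, W i = ⊤

lemma IsOrthogonalDecomposition.eq_zero_of_mem_of_mem (hW : IsOrthogonalDecomposition W)
    {i j : κ} {x : V} (hi : x ∈ W i) (hj : x ∈ W j) (hij : i ≠ j) : x = 0 :=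
  inner_self_eq_zero.mp (hW.orthogonal i j hij x hi x hj)

lemma IsProductType.apply_eq_zero_of_ne {T : Tensor4 V} (hT : IsProductType W T)
    (hW : IsOrthogonalDecomposition W) {i j : κ} {p q : V} (hp : p ∈ W i) (hq : q ∈ W j)
    (hij : i ≠ j) (y z : V) : T p y z q = 0 := by
  rcases eq_or_ne p 0 with rfl | hp0
  · simp
  rcases eq_or_ne q 0 with rfl | hq0
  · simp
  have hdisj : ¬ ∃ k, p ∈ W k ∧ q ∈ W k := by
    rintro ⟨k, hpk, hqk⟩
    rcases eq_or_ne i k with rfl | hik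
    · exact hq0 (hW.eq_zero_of_mem_of_mem hq hqk (Ne.symm hij))
    · exact hp0 (hW.eq_zero_of_mem_of_mem hp hpk hik)
  refine eq_zero_of_forall_mem_of_iSup_eq_top hW.iSup_eq_top (B := fun y z => T p y z q)
    (by simp) (by simp) (fun c c' y hy z hz => ?_) y z
  exact hT p y z q ⟨i, hp⟩ ⟨c, hy⟩ ⟨c', hz⟩ ⟨j, hq⟩ fun ⟨k, hpk, _, _, hqk⟩ => hdisj ⟨k, hpk, hqk⟩

lemma IsProductType.ric_eq_zero_of_ne {T : Tensor4 V} (hT : IsProductType W T)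
    (hW : IsOrthogonalDecomposition W) (b : OrthonormalBasis ι ℝ V) {i j : κ} {p q : V}
    (hp : p ∈ W i) (hq : q ∈ W j) (hij : i ≠ j) : ric b T p q = 0 :=
  Finset.sum_eq_zero fun _ _ => hT.apply_eq_zero_of_ne hW hp hq hij _ _

end ProductType

lemma OrthJ.inner_self_apply_eq_zero {J : V →ₗ[ℝ] V} (hJ : OrthJ J) (x : V) : ⟪x, J x⟫ = 0 := by
  have h := hJ.2 x (J x)
  rw [hJ.1, inner_neg_right, real_inner_comm] at h
  linarith

lemma two_mul_eq_of_pairwise {c τ x₁ x₂ x₃ s₁ s₂ s₃ : ℝ} (hx₂ : x₂ ≠ 0) (hx₃ : x₃ ≠ 0)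
    (h₁₂ : c * (x₁ * s₂ + x₂ * s₁) = τ * (x₁ * x₂))
    (h₁₃ : c * (x₁ * s₃ + x₃ * s₁) = τ * (x₁ * x₃))
    (h₂₃ : c * (x₂ * s₃ + x₃ * s₂) = τ * (x₂ * x₃)) :
    2 * c * s₁ = τ * x₁ := by
  have h : (2 * c * s₁ - τ * x₁) * (x₂ * x₃) = 0 := by
    linear_combination x₃ * h₁₂ + x₂ * h₁₃ - x₁ * h₂₃
  exact sub_eq_zero.mp ((mul_eq_zero.mp h).resolve_right (mul_ne_zero hx₂ hx₃))

section Bstar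

variable {m : ℕ} {J : V →ₗ[ℝ] V} {R : Tensor4 V} {b : OrthonormalBasis ι ℝ V}

lemma Bstar_eq_Rstar_of_ricStar_eq_zero (hS : ∀ X Y, ricStar J b R X Y = 0) (X Y Z U : V) :
    Bstar m J b R X Y Z U = Rstar J R X Y Z U := by
  have hτ : scalStar J b R = 0 := Finset.sum_eq_zero fun i _ => hS (b i) (b i)
  simp [Bstar, phi, psi, hS, hτ]

lemma Bstar_apply_of_orthogonal {p q : V} (hJ : ∀ x : V, ⟪x, J x⟫ = 0) (hpq : ⟪p, q⟫ = 0)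
    (hpJq : ⟪p, J q⟫ = 0) (hqJp : ⟪q, J p⟫ = 0) :
    4 * (m + 1) * (m + 2) * Bstar m J b R p q q p =
      4 * (m + 1) * (m + 2) * Rstar J R p q q p
        - 2 * (m + 1) * (⟪p, p⟫ * ricStar J b R q q + ⟪q, q⟫ * ricStar J b R p p)
        + scalStar J b R * (⟪p, p⟫ * ⟪q, q⟫) := by
  have hqp : ⟪q, p⟫ = 0 := by rw [real_inner_comm, hpq]
  simp only [Bstar, phi, psi, pi1, pi2, hJ, hpq, hqp, hpJq, hqJp]
  field_simp
  ring

end Bstar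

section ThreeFactors

variable {m : ℕ} {J : V →ₗ[ℝ] V} {R : Tensor4 V} {b : OrthonormalBasis ι ℝ V}
  {κ : Type*} {W : κ → Submodule ℝ V}

lemma ricStar_cross_of_Bstar_eq_zero (hJ : OrthJ J) (hR : CurvatureLike R)
    (hW : IsOrthogonalDecomposition W) (hJW : ∀ j, ∀ x ∈ W j, J x ∈ W j)
    (hprod : IsProductType W R) (hB : ∀ X Y Z U, Bstar m J b R X Y Z U = 0)
    {i j : κ} {p q : V} (hp : p ∈ W i) (hq : q ∈ W j) (hij : i ≠ j) :
    2 * (m + 1) * (⟪p, p⟫ * ricStar J b R q q + ⟪q, q⟫ * ricStar J b R p p) =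
      scalStar J b R * (⟪p, p⟫ * ⟪q, q⟫) := by
  have hRs : Rstar J R p q q p = 0 := by
    rw [← rstarTensor_apply, hR.rstarTensor.1, neg_eq_zero]
    exact (hprod.rstarTensor hJ.1 hJW).apply_eq_zero_of_ne hW hq hp (Ne.symm hij) p q
  have h := Bstar_apply_of_orthogonal (m := m) (b := b) (R := R) hJ.inner_self_apply_eq_zero
    (hW.orthogonal i j hij p hp q hq) (hW.orthogonal i j hij p hp (J q) (hJW j q hq))
    (hW.orthogonal j i (Ne.symm hij) q hq (J p) (hJW i p hp))
  rw [hB, hRs] at h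
  linarith

lemma four_mul_ricStar_eq_of_Bstar_eq_zero (hJ : OrthJ J) (hR : CurvatureLike R)
    (hW : IsOrthogonalDecomposition W) (hJW : ∀ j, ∀ x ∈ W j, J x ∈ W j)
    (hprod : IsProductType W R) (hne : ∀ j, W j ≠ ⊥)
    (h3 : ∀ i : κ, ∃ j k, i ≠ j ∧ i ≠ k ∧ j ≠ k) (hB : ∀ X Y Z U, Bstar m J b R X Y Z U = 0)
    (X Y : V) : 4 * (m + 1) * ricStar J b R X Y = scalStar J b R * ⟪X, Y⟫ := by
  have hcross {i j : κ} {p q : V} (hp : p ∈ W i) (hq : q ∈ W j) (hij : i ≠ j) :=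
    ricStar_cross_of_Bstar_eq_zero (m := m) (b := b) hJ hR hW hJW hprod hB hp hq hij
  have hdiag : ∀ i, ∀ p ∈ W i, 4 * (m + 1) * ricStar J b R p p = scalStar J b R * ⟪p, p⟫ := by
    intro i p hp
    obtain ⟨j, k, hij, hik, hjk⟩ := h3 i
    obtain ⟨y, hy, hy0⟩ := (Submodule.ne_bot_iff (W j)).mp (hne j)
    obtain ⟨z, hz, hz0⟩ := (Submodule.ne_bot_iff (W k)).mp (hne k)
    linear_combination two_mul_eq_of_pairwise (inner_self_ne_zero.mpr hy0)
      (inner_self_ne_zero.mpr hz0) (hcross hp hy hij) (hcross hp hz hik) (hcross hy hz hjk)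
  rw [ricStar_eq_ric] at hdiag ⊢
  refine sub_eq_zero.mp (eq_zero_of_forall_mem_of_iSup_eq_top hW.iSup_eq_top
    (B := fun X Y => 4 * (m + 1) * ric b (rstarTensor J R) X Y - scalStar J b R * ⟪X, Y⟫)
    (fun X X' Y => ?_) (fun X Y Y' => ?_) (fun i j p hp q hq => ?_) X Y)
  · simp only [ric_add_left, inner_add_left]
    ring
  · simp only [ric_add_right, inner_add_right]
    ring
  rcases eq_or_ne i j with rfl | hij
  · have hpq := hdiag i (p + q) (add_mem hp hq)
    rw [ric_add_left, ric_add_right, ric_add_right, real_inner_add_add_self] at hpq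
    linear_combination hpq / 2 - hdiag i p hp / 2 - hdiag i q hq / 2 +
      2 * (m + 1) * ric_comm hR.rstarTensor b p q
  · rw [(hprod.rstarTensor hJ.1 hJW).ric_eq_zero_of_ne hW b hp hq hij,
      hW.orthogonal i j hij p hp q hq]
    ring

lemma ricStar_eq_zero_of_Bstar_eq_zero (hcard : Fintype.card ι = 2 * m) (hJ : OrthJ J)
    (hR : CurvatureLike R) (hW : IsOrthogonalDecomposition W)
    (hJW : ∀ j, ∀ x ∈ W j, J x ∈ W j) (hprod : IsProductType W R) (hne : ∀ j, W j ≠ ⊥)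
    (h3 : ∀ i : κ, ∃ j k, i ≠ j ∧ i ≠ k ∧ j ≠ k) (hB : ∀ X Y Z U, Bstar m J b R X Y Z U = 0)
    (X Y : V) : ricStar J b R X Y = 0 := by
  have hE := four_mul_ricStar_eq_of_Bstar_eq_zero hJ hR hW hJW hprod hne h3 hB
  have hτ : scalStar J b R = 0 := by
    have h := mul_scal_eq_of_mul_ric_eq (T := rstarTensor J R) b hE
    rw [hcard, Nat.cast_mul, Nat.cast_ofNat, ← scalStar_eq_scal] at h
    have h' : (2 * m + 4 : ℝ) * scalStar J b R = 0 := by linear_combination h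
    exact (mul_eq_zero.mp h').resolve_left (by positivity)
  have h := hE X Y
  rw [hτ, zero_mul] at h
  exact (mul_eq_zero.mp h).resolve_left (by positivity)

end ThreeFactors

theorem Bstar_eq_zero_iff_flat_of_three_factors_general {V : Type*} [NormedAddCommGroup V]
    [InnerProductSpace ℝ V] {m : ℕ}
    (J : V →ₗ[ℝ] V) (hJ : OrthJ J) (R : Tensor4 V) (hR : CurvatureLike R)
    (b : OrthonormalBasis (Fin (2 * m)) ℝ V)
    (W : Fin 3 → Submodule ℝ V)
    (hne : ∀ j, W j ≠ ⊥)
    (horth : ∀ i j, i ≠ j → ∀ x ∈ W i, ∀ y ∈ W j, ⟪x, y⟫ = (0 : ℝ))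
    (hsup : (⨆ j, W j) = ⊤)
    (hJW : ∀ j, ∀ x ∈ W j, J x ∈ W j)
    (hprod : ∀ X Y Z U : V, (∃ i, X ∈ W i) → (∃ i, Y ∈ W i) → (∃ i, Z ∈ W i) →
      (∃ i, U ∈ W i) → (¬ ∃ j, X ∈ W j ∧ Y ∈ W j ∧ Z ∈ W j ∧ U ∈ W j) →
      R X Y Z U = 0) :
    (∀ X Y Z U : V, Bstar m J b R X Y Z U = 0) ↔
      ∀ X : V, R X (J X) (J X) X = 0 := by
  have hW : IsOrthogonalDecomposition W := ⟨horth, hsup⟩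
  constructor
  · intro hB X
    have hS := ricStar_eq_zero_of_Bstar_eq_zero (Fintype.card_fin _) hJ hR hW hJW hprod hne
      (by decide) hB
    rw [← Rstar_apply_self_J_J_self hJ.1 hR, ← Bstar_eq_Rstar_of_ricStar_eq_zero hS]
    exact hB _ _ _ _
  · intro hH X Y Z U
    have hRs := Tensor4.eq_zero_of_holomorphic_eq_zero hJ.1 hR.rstarTensor
      (rstarTensor_apply_J_J hJ.1) fun X => (Rstar_apply_self_J_J_self hJ.1 hR X).trans (hH X)
    have hS : ∀ X Y, ricStar J b R X Y = 0 := fun X Y =>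
      Finset.sum_eq_zero fun i _ => hRs X (b i) (b i) Y
    rw [Bstar_eq_Rstar_of_ricStar_eq_zero hS]
    exact hRs X Y Z U

/-- Corollary 2.2, pointwise form. -/
theorem Bstar_eq_zero_iff_flat_of_three_factors {V : Type*} [NormedAddCommGroup V]
    [InnerProductSpace ℝ V] [FiniteDimensional ℝ V] {m : ℕ}
    (hm : 1 ≤ m) (hdim : Module.finrank ℝ V = 2 * m)
    (J : V →ₗ[ℝ] V) (hJ : OrthJ J) (R : Tensor4 V) (hR : CurvatureLike R)
    (b : OrthonormalBasis (Fin (2 * m)) ℝ V)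
    (W : Fin 3 → Submodule ℝ V)
    (hne : ∀ j, W j ≠ ⊥)
    (horth : ∀ i j, i ≠ j → ∀ x ∈ W i, ∀ y ∈ W j, ⟪x, y⟫ = (0 : ℝ))
    (hsup : (⨆ j, W j) = ⊤)
    (hJW : ∀ j, ∀ x ∈ W j, J x ∈ W j)
    (hprod : ∀ X Y Z U : V, (∃ i, X ∈ W i) → (∃ i, Y ∈ W i) → (∃ i, Z ∈ W i) →
      (∃ i, U ∈ W i) → (¬ ∃ j, X ∈ W j ∧ Y ∈ W j ∧ Z ∈ W j ∧ U ∈ W j) →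
      R X Y Z U = 0) :
    (∀ X Y Z U : V, Bstar m J b R X Y Z U = 0) ↔
      ∀ X : V, R X (J X) (J X) X = 0 :=
  Bstar_eq_zero_iff_flat_of_three_factors_general J hJ R hR b W hne horth hsup hJW hprod
end
end

section
/- Let R be an RK-tensor with m > 2 whose Bochner curvature tensor vanishes, B = 0, and suppose S = (τ/(2m))g, S' = (τ'/(2m))g, and τ = 5τ'. Then R = ((5m+1)τ/(20m(m²−1)))π₁ + ((m−3)τ/(20m(m²−1)))π₂; in particular R has constant holomorphic sectional curvature: R(X,JX,JX,X) = (2τ/(5m(m+1)))g(X,X)² for all X ∈ V. -/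
/-!
With `S` and `S'` proportional to `g`, the operators `φ` and `ψ` turn them into multiples of
`π₁` and `π₂`, so `B = 0` expresses `R` as a combination of `π₁ + π₂` and `3π₁ − π₂` whose
coefficients depend only on `τ`, `τ'` and `m`. Substituting `τ' = τ/5` gives the stated formula,
and evaluating `π₁`, `π₂` on `(X, JX, JX, X)` gives `g(X,X)²` and `3 g(X,X)²`.
-/

open RealInnerProductSpace
open scoped BigOperators

noncomputable section

variable {V : Type*} [NormedAddCommGroup V] [InnerProductSpace ℝ V]

variable {ι : Type*} [Fintype ι]

section CurvatureIdentities

theorem phi_of_eq_smul_inner {Q : V → V → ℝ} {c : ℝ} (hQ : ∀ x y, Q x y = c * ⟪x, y⟫)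
    (X Y Z U : V) : phi Q X Y Z U = 2 * c * pi1 X Y Z U := by
  simp only [phi, pi1, hQ]
  ring

theorem psi_of_eq_smul_inner (J : V →ₗ[ℝ] V) {Q : V → V → ℝ} {c : ℝ}
    (hQ : ∀ x y, Q x y = c * ⟪x, y⟫) (X Y Z U : V) :
    psi J Q X Y Z U = 2 * c * pi2 J X Y Z U := by
  simp only [psi, pi2, hQ, real_inner_comm (J _)]
  ring

theorem OrthJ.inner_apply_self_eq_zero {J : V →ₗ[ℝ] V} (hJ : OrthJ J) (X : V) :
    ⟪X, J X⟫ = 0 := by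
  have h := hJ.2 X (J X)
  rw [hJ.1, inner_neg_right, real_inner_comm] at h
  linarith

theorem pi1_holomorphic {J : V →ₗ[ℝ] V} (hJ : OrthJ J) (X : V) :
    pi1 X (J X) (J X) X = ⟪X, X⟫ ^ 2 := by
  simp only [pi1, hJ.2, real_inner_comm X (J X), hJ.inner_apply_self_eq_zero]
  ring

theorem pi2_holomorphic {J : V →ₗ[ℝ] V} (hJ : OrthJ J) (X : V) :
    pi2 J X (J X) (J X) X = 3 * ⟪X, X⟫ ^ 2 := by
  simp only [pi2, hJ.1, hJ.2, inner_neg_right, hJ.inner_apply_self_eq_zero]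
  ring

variable {m : ℕ} {J : V →ₗ[ℝ] V} {b : OrthonormalBasis ι ℝ V} {R : Tensor4 V}

theorem Bochner_eq_of_ric_eq_smul_inner (hm : 2 < m)
    (hS : ∀ X Y : V, ric b R X Y = (scal b R / (2 * (m : ℝ))) * ⟪X, Y⟫)
    (hS' : ∀ X Y : V, ric' J b R X Y = (scal' J b R / (2 * (m : ℝ))) * ⟪X, Y⟫)
    (X Y Z U : V) :
    Bochner m J b R X Y Z U = R X Y Z U
      - (scal b R + 3 * scal' J b R) / (16 * m * (m + 1)) * (pi1 X Y Z U + pi2 J X Y Z U)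
      - (scal b R - scal' J b R) / (16 * m * (m - 1)) * (3 * pi1 X Y Z U - pi2 J X Y Z U) := by
  have hplus : ∀ x y, ric b R x y + 3 * ric' J b R x y
      = (scal b R + 3 * scal' J b R) / (2 * m) * ⟪x, y⟫ := by
    intro x y; rw [hS, hS']; ring
  have hminus : ∀ x y, ric b R x y - ric' J b R x y
      = (scal b R - scal' J b R) / (2 * m) * ⟪x, y⟫ := by
    intro x y; rw [hS, hS']; ring
  rw [Bochner, phi_of_eq_smul_inner hplus, psi_of_eq_smul_inner J hplus,
    phi_of_eq_smul_inner hminus, psi_of_eq_smul_inner J hminus]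
  have hm' : (2 : ℝ) < m := by exact_mod_cast hm
  have h1 : (m : ℝ) - 1 ≠ 0 := by linarith
  have h2 : (m : ℝ) - 2 ≠ 0 := by linarith
  -- `1/(8m(m+2)) - 1/(16(m+1)(m+2)) = 1/(16m(m+1))`, and likewise with `m-1`, `m-2`
  field_simp
  ring

theorem apply_eq_of_Bochner_eq_zero (hm : 2 < m)
    (hS : ∀ X Y : V, ric b R X Y = (scal b R / (2 * (m : ℝ))) * ⟪X, Y⟫)
    (hS' : ∀ X Y : V, ric' J b R X Y = (scal' J b R / (2 * (m : ℝ))) * ⟪X, Y⟫)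
    {X Y Z U : V} (hB : Bochner m J b R X Y Z U = 0) :
    R X Y Z U =
      (scal b R + 3 * scal' J b R) / (16 * m * (m + 1)) * (pi1 X Y Z U + pi2 J X Y Z U)
      + (scal b R - scal' J b R) / (16 * m * (m - 1)) * (3 * pi1 X Y Z U - pi2 J X Y Z U) := by
  rw [Bochner_eq_of_ric_eq_smul_inner hm hS hS'] at hB
  linarith

end CurvatureIdentities

theorem constant_holSec_of_Bochner_eq_zero_general {V : Type*} [NormedAddCommGroup V]
    [InnerProductSpace ℝ V] {m : ℕ}
    (hm : 2 < m)
    (J : V →ₗ[ℝ] V) (hJ : OrthJ J) (R : Tensor4 V)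
    (b : OrthonormalBasis (Fin (2 * m)) ℝ V)
    (hB : ∀ X Y Z U : V, Bochner m J b R X Y Z U = 0)
    (hS : ∀ X Y : V, ric b R X Y = (scal b R / (2 * (m : ℝ))) * ⟪X, Y⟫)
    (hS' : ∀ X Y : V, ric' J b R X Y = (scal' J b R / (2 * (m : ℝ))) * ⟪X, Y⟫)
    (htau : scal b R = 5 * scal' J b R) :
    (∀ X Y Z U : V,
      R X Y Z U =
        ((5 * (m : ℝ) + 1) * scal b R / (20 * (m : ℝ) * ((m : ℝ) ^ 2 - 1))) * pi1 X Y Z U +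
        (((m : ℝ) - 3) * scal b R / (20 * (m : ℝ) * ((m : ℝ) ^ 2 - 1))) * pi2 J X Y Z U) ∧
    (∀ X : V,
      R X (J X) (J X) X =
        (2 * scal b R / (5 * (m : ℝ) * ((m : ℝ) + 1))) * ⟪X, X⟫ ^ 2) := by
  have hm' : (2 : ℝ) < m := by exact_mod_cast hm
  have hm1 : (m : ℝ) - 1 ≠ 0 := by linarith
  have hm2 : (m : ℝ) ^ 2 - 1 ≠ 0 := by nlinarith
  have hR : ∀ X Y Z U : V, R X Y Z U =
      ((5 * (m : ℝ) + 1) * scal b R / (20 * (m : ℝ) * ((m : ℝ) ^ 2 - 1))) * pi1 X Y Z U +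
      (((m : ℝ) - 3) * scal b R / (20 * (m : ℝ) * ((m : ℝ) ^ 2 - 1))) * pi2 J X Y Z U := by
    intro X Y Z U
    rw [apply_eq_of_Bochner_eq_zero hm hS hS' (hB X Y Z U), htau]
    field_simp
    ring
  refine ⟨hR, fun X => ?_⟩
  rw [hR, pi1_holomorphic hJ, pi2_holomorphic hJ]
  field_simp
  ring

/-- if `B = 0`, `S = (τ/(2m))g`, `S' = (τ'/(2m))g` and `τ = 5τ'`,
then `R` has constant holomorphic sectional curvature. -/
theorem constant_holSec_of_Bochner_eq_zero {V : Type*} [NormedAddCommGroup V]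
    [InnerProductSpace ℝ V] [FiniteDimensional ℝ V] {m : ℕ}
    (hm : 2 < m) (hdim : Module.finrank ℝ V = 2 * m)
    (J : V →ₗ[ℝ] V) (hJ : OrthJ J) (R : Tensor4 V) (hR : CurvatureLike R)
    (hRK : IsRK J R) (b : OrthonormalBasis (Fin (2 * m)) ℝ V)
    (hB : ∀ X Y Z U : V, Bochner m J b R X Y Z U = 0)
    (hS : ∀ X Y : V, ric b R X Y = (scal b R / (2 * (m : ℝ))) * ⟪X, Y⟫)
    (hS' : ∀ X Y : V, ric' J b R X Y = (scal' J b R / (2 * (m : ℝ))) * ⟪X, Y⟫)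
    (htau : scal b R = 5 * scal' J b R) :
    (∀ X Y Z U : V,
      R X Y Z U =
        ((5 * (m : ℝ) + 1) * scal b R / (20 * (m : ℝ) * ((m : ℝ) ^ 2 - 1))) * pi1 X Y Z U +
        (((m : ℝ) - 3) * scal b R / (20 * (m : ℝ) * ((m : ℝ) ^ 2 - 1))) * pi2 J X Y Z U) ∧
    (∀ X : V,
      R X (J X) (J X) X =
        (2 * scal b R / (5 * (m : ℝ) * ((m : ℝ) + 1))) * ⟪X, X⟫ ^ 2) :=
  constant_holSec_of_Bochner_eq_zero_general hm J hJ R b hB hS hS' htau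
end
end
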